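/- arXiv:1311.4368 — 5 statements merged into one kernel-verified Lean document; each statement's English description precedes it below -/
import Mathlib

section
/- The system of ODEs dm+/dt = -rho*m+*(1-m+-m-) + (q-m+)*(m+ + m-), dm- /dt = -m-*(1-m+-m-) + rho*(1-q-m-)*(m+ + m-), with parameters 0 < rho < 1 and 1/2 <= q < 1, has exactly three equilibrium points in the plane provided rho != (1-q)/q... specifically, (q, 1-q) and (0,0) are always equilibria, and ((q(1+rho)-rho)/((1+rho)(1-rho)), rho*(q(1+rho)-rho)/((1+rho)(1-rho))) is an equilibrium. -/
/-- The macroscopic voter-model vector field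
`V(m⁺,m⁻) = (-ρ m⁺ (1-m⁺-m⁻) + (q-m⁺)(m⁺+m⁻), -m⁻(1-m⁺-m⁻) + ρ(1-q-m⁻)(m⁺+m⁻))`,
with `ρ ∈ (0,1)` and `q ∈ [1/2,1)` and `ρ ≠ (1-q)/q`, has exactly three equilibrium points in
the plane: `(q, 1-q)`, `(0,0)` and
`((q(1+ρ)-ρ)/((1+ρ)(1-ρ)), ρ(q(1+ρ)-ρ)/((1+ρ)(1-ρ)))`, and these are pairwise distinct. -/
theorem equilibria_of_macroscopic_dynamics (ρ q : ℝ)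
    (hρ : ρ ∈ Set.Ioo (0 : ℝ) 1) (hq : q ∈ Set.Ico (1/2 : ℝ) 1)
    (hne : ρ ≠ (1 - q) / q) :
    (((q, 1 - q) : ℝ × ℝ) ≠ (0, 0) ∧
     ((q, 1 - q) : ℝ × ℝ) ≠ ((q * (1 + ρ) - ρ) / ((1 + ρ) * (1 - ρ)),
        ρ * (q * (1 + ρ) - ρ) / ((1 + ρ) * (1 - ρ))) ∧
     ((0, 0) : ℝ × ℝ) ≠ ((q * (1 + ρ) - ρ) / ((1 + ρ) * (1 - ρ)),
        ρ * (q * (1 + ρ) - ρ) / ((1 + ρ) * (1 - ρ)))) ∧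
    ∀ p : ℝ × ℝ,
      (-ρ * p.1 * (1 - p.1 - p.2) + (q - p.1) * (p.1 + p.2) = 0 ∧
        -p.2 * (1 - p.1 - p.2) + ρ * (1 - q - p.2) * (p.1 + p.2) = 0)
      ↔ (p = (q, 1 - q) ∨ p = (0, 0) ∨
          p = ((q * (1 + ρ) - ρ) / ((1 + ρ) * (1 - ρ)),
            ρ * (q * (1 + ρ) - ρ) / ((1 + ρ) * (1 - ρ)))) := by
  obtain ⟨hρ0, hρ1⟩ := hρ
  obtain ⟨hq0, hq1⟩ := hq
  have hqpos : (0:ℝ) < q := by linarith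
  have hden : ((1 + ρ) * (1 - ρ)) ≠ 0 := by nlinarith
  have hdenpos : (0:ℝ) < (1 + ρ) * (1 - ρ) := by nlinarith
  have hnumpos : (0:ℝ) < q * (1 + ρ) - ρ := by nlinarith
  have hqρ : ρ * q ≠ 1 - q := by
    intro h
    apply hne
    rw [eq_div_iff hqpos.ne']
    linarith
  constructor
  · refine ⟨?_, ?_, ?_⟩
    · intro h
      rw [Prod.mk.injEq] at h
      linarith [h.1]
    · intro h
      rw [Prod.mk.injEq] at h
      have h1 := h.1
      rw [eq_div_iff hden] at h1
      have : ρ * (1 - q * ρ - q) = 0 := by nlinarith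
      have h2 : 1 - q * ρ - q = 0 := by
        rcases mul_eq_zero.mp this with h' | h'
        · exact absurd h' hρ0.ne'
        · exact h'
      exact hqρ (by linarith)
    · intro h
      rw [Prod.mk.injEq] at h
      have h1 := h.1
      rw [eq_comm, div_eq_iff hden] at h1
      nlinarith
  · rintro ⟨x, y⟩
    simp only [Prod.mk.injEq]
    constructor
    · rintro ⟨h1, h2⟩
      by_cases hs : x + y = 0
      · right; left
        have hx : ρ * x = 0 := by
          linear_combination -h1 + (ρ * x + q - x) * hs
        have hx0 : x = 0 := by
          rcases mul_eq_zero.mp hx with h' | h'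
          · exact absurd h' hρ0.ne'
          · exact h'
        exact ⟨hx0, by linarith⟩
      · have hx0 : x ≠ 0 := by
          intro h
          apply hs
          have hqy : q * (x + y) = 0 := by
            linear_combination h1 + (ρ * (1 - x - y) + (x + y)) * (by linarith : x = 0)
          rcases mul_eq_zero.mp hqy with h' | h'
          · exact absurd h' hqpos.ne'
          · exact h'
        have h3 : (x + y) * (ρ ^ 2 * x * (1 - q - y) - y * (q - x)) = 0 := by
          linear_combination ρ * x * h2 - y * h1
        have h4 := (mul_eq_zero.mp h3).resolve_left hs
        have hA : y * (q - (1 - ρ ^ 2) * x) = ρ ^ 2 * (1 - q) * x := by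
          linear_combination -h4
        have hC : ρ * x = (x + y) * (q - (1 - ρ) * x) := by
          linear_combination -h1
        have hQ : x * ((x - q) * ((1 - ρ ^ 2) * x - (q * (1 + ρ) - ρ))) * (1 - ρ) = 0 := by
          linear_combination -(q - (1 - ρ) * x) * hA - (q - (1 - ρ ^ 2) * x) * hC
        have hfac : (x - q) * ((1 - ρ ^ 2) * x - (q * (1 + ρ) - ρ)) = 0 := by
          have h5 := mul_eq_zero.mp hQ
          rcases h5 with h5 | h5
          · rcases mul_eq_zero.mp h5 with h6 | h6
            · exact absurd h6 hx0
            · exact h6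
          · linarith
        rcases mul_eq_zero.mp hfac with h6 | h6
        · left
          have hxq : x = q := by linarith
          rw [hxq] at hA
          have h7 : ρ ^ 2 * q * (y - (1 - q)) = 0 := by linear_combination hA
          have h8 : y = 1 - q := by
            rcases mul_eq_zero.mp h7 with h' | h'
            · exact absurd h' (by positivity)
            · linarith
          exact ⟨hxq, h8⟩
        · right; right
          have h7 : (1 - ρ ^ 2) * x = q * (1 + ρ) - ρ := by linarith
          have hy : ρ * (1 - q) * (y - ρ * x) = 0 := by
            linear_combination hA + y * h7
          have hyx : y = ρ * x := by
            rcases mul_eq_zero.mp hy with h' | h'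
            · have : (0:ℝ) < ρ * (1 - q) := by nlinarith
              exact absurd h' this.ne'
            · linarith
          have hx : x = (q * (1 + ρ) - ρ) / ((1 + ρ) * (1 - ρ)) := by
            rw [eq_div_iff hden]
            linear_combination h7
          refine ⟨hx, ?_⟩
          rw [hyx, hx, mul_div_assoc]
    · rintro (⟨hx, hy⟩ | ⟨hx, hy⟩ | ⟨hx, hy⟩) <;> subst hx <;> subst hy
      · constructor <;> ring
      · constructor <;> ring
      · constructor <;> (field_simp; ring)
end

section
/- For q = 1/2 and rho in (0,1), the Jacobian matrix of the vector field b at the interior equilibrium z = (1/(2(1+rho)), rho/(2(1+rho))) has two strictly negative real eigenvalues (equivalently, its trace is negative and its determinant is positive, and its discriminant is nonnegative). -/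
/-!
At the equilibrium `x + y = 1/2`, so the Jacobian is the symmetric matrix with diagonal
`-(1 + ρ²)/(2(1 + ρ))` and off-diagonal `ρ/(1 + ρ)`. Its trace is negative, its determinant is
`(1 - ρ)²/4 > 0` and its discriminant is `(2ρ/(1 + ρ))² ≥ 0`. A real eigenvalue `μ` is a root of
`μ² - tr μ + det`, which is positive for `μ ≥ 0` once `tr < 0 < det`.
-/

namespace Matrix

variable {K : Type*} [Field K]

theorem eigenvalue_sq_sub_trace_mul_add_det_eq_zero {A : Matrix (Fin 2) (Fin 2) K} {μ : K}
    {v : Fin 2 → K} (hv : v ≠ 0) (hAv : A *ᵥ v = μ • v) :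
    μ ^ 2 - A.trace * μ + A.det = 0 := by
  have hker : (A - μ • 1) *ᵥ v = 0 := by
    rw [sub_mulVec, smul_mulVec, one_mulVec, hAv, sub_self]
  have hdet := exists_mulVec_eq_zero_iff.mp ⟨v, hv, hker⟩
  rw [det_fin_two] at hdet
  rw [trace_fin_two, det_fin_two]
  simp only [one_fin_two, smul_of, smul_cons, smul_eq_mul, mul_one, mul_zero, smul_empty,
    sub_apply, of_apply, cons_val', cons_val_zero, cons_val_fin_one, cons_val_one, sub_zero] at hdet
  linear_combination hdet

theorem eigenvalue_neg_of_trace_neg_of_det_pos [LinearOrder K] [IsStrictOrderedRing K]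
    {A : Matrix (Fin 2) (Fin 2) K} (htr : A.trace < 0) (hdet : 0 < A.det) {μ : K}
    {v : Fin 2 → K} (hv : v ≠ 0) (hAv : A *ᵥ v = μ • v) : μ < 0 := by
  have hchar := eigenvalue_sq_sub_trace_mul_add_det_eq_zero hv hAv
  by_contra! hμ
  nlinarith [mul_nonpos_of_nonpos_of_nonneg htr.le hμ, sq_nonneg μ]

end Matrix

section Drift

variable (ρ x y : ℝ)

theorem hasDerivAt_drift₁_fst :
    HasDerivAt (fun x => (1/2 - x) * (x + y) - ρ * x * (1 - x - y))
      (1/2 - 2 * x - y - ρ * (1 - 2 * x - y)) x :=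
  ((((hasDerivAt_id' x).const_sub (1/2)).mul ((hasDerivAt_id' x).add_const y)).sub
    (((hasDerivAt_id' x).const_mul ρ).mul (((hasDerivAt_id' x).const_sub 1).sub_const y))).congr_deriv
    (by ring)

theorem hasDerivAt_drift₁_snd :
    HasDerivAt (fun y => (1/2 - x) * (x + y) - ρ * x * (1 - x - y)) (1/2 - x + ρ * x) y :=
  ((((hasDerivAt_id' y).const_add x).const_mul (1/2 - x)).sub
    (((hasDerivAt_id' y).const_sub (1 - x)).const_mul (ρ * x))).congr_deriv (by ring)

theorem hasDerivAt_drift₂_fst :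
    HasDerivAt (fun x => ρ * (1/2 - y) * (x + y) - y * (1 - x - y)) (ρ * (1/2 - y) + y) x :=
  ((((hasDerivAt_id' x).add_const y).const_mul (ρ * (1/2 - y))).sub
    ((((hasDerivAt_id' x).const_sub 1).sub_const y).const_mul y)).congr_deriv (by ring)

theorem hasDerivAt_drift₂_snd :
    HasDerivAt (fun y => ρ * (1/2 - y) * (x + y) - y * (1 - x - y))
      (ρ * (1/2 - x - 2 * y) - (1 - x - 2 * y)) y :=
  (((((hasDerivAt_id' y).const_sub (1/2)).const_mul ρ).mul ((hasDerivAt_id' y).const_add x)).sub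
    ((hasDerivAt_id' y).mul ((hasDerivAt_id' y).const_sub (1 - x)))).congr_deriv (by ring)

end Drift

/-- For `q = 1/2` and `ρ ∈ (0,1)`, the Jacobian matrix of the vector field
`b(x,y) = ((1/2-x)(x+y) - ρx(1-x-y), ρ(1/2-y)(x+y) - y(1-x-y))` at the interior equilibrium
`z = (1/(2(1+ρ)), ρ/(2(1+ρ)))` has two strictly negative real eigenvalues: its trace is
negative, its determinant is positive, its discriminant is nonnegative, and every real
eigenvalue is strictly negative. -/
theorem jacobian_at_interior_equilibrium_stable (ρ : ℝ) (hρ : ρ ∈ Set.Ioo (0 : ℝ) 1) :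
    let b1 : ℝ → ℝ → ℝ := fun x y => (1/2 - x) * (x + y) - ρ * x * (1 - x - y)
    let b2 : ℝ → ℝ → ℝ := fun x y => ρ * (1/2 - y) * (x + y) - y * (1 - x - y)
    let z1 : ℝ := 1 / (2 * (1 + ρ))
    let z2 : ℝ := ρ / (2 * (1 + ρ))
    let a11 := deriv (fun x => b1 x z2) z1
    let a12 := deriv (fun y => b1 z1 y) z2
    let a21 := deriv (fun x => b2 x z2) z1
    let a22 := deriv (fun y => b2 z1 y) z2
    a11 + a22 < 0 ∧ 0 < a11 * a22 - a12 * a21 ∧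
    0 ≤ (a11 + a22) ^ 2 - 4 * (a11 * a22 - a12 * a21) ∧
    ∀ μ : ℝ, (∃ v : Fin 2 → ℝ, v ≠ 0 ∧
        (Matrix.of ![![a11, a12], ![a21, a22]]).mulVec v = μ • v) → μ < 0 := by
  intro b1 b2 z1 z2 a11 a12 a21 a22
  obtain ⟨hρ₀, hρ₁⟩ := hρ
  have hρ' : 1 + ρ ≠ 0 := by positivity
  have h11 : a11 = -(1 + ρ ^ 2) / (2 * (1 + ρ)) := by
    refine (hasDerivAt_drift₁_fst ρ z1 z2).deriv.trans ?_
    simp only [z1, z2]; field_simp; ring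
  have h12 : a12 = ρ / (1 + ρ) := by
    refine (hasDerivAt_drift₁_snd ρ z1 z2).deriv.trans ?_
    simp only [z1]; field_simp; ring
  have h21 : a21 = ρ / (1 + ρ) := by
    refine (hasDerivAt_drift₂_fst ρ z1 z2).deriv.trans ?_
    simp only [z2]; field_simp; ring
  have h22 : a22 = -(1 + ρ ^ 2) / (2 * (1 + ρ)) := by
    refine (hasDerivAt_drift₂_snd ρ z1 z2).deriv.trans ?_
    simp only [z1, z2]; field_simp; ring
  have htr : a11 + a22 < 0 := by
    rw [h11, h22, ← add_div]
    exact div_neg_of_neg_of_pos (by nlinarith) (by positivity)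
  have hdet : 0 < a11 * a22 - a12 * a21 := by
    have hdet_eq : a11 * a22 - a12 * a21 = (1 - ρ) ^ 2 / 4 := by
      rw [h11, h12, h21, h22]; field_simp; ring
    rw [hdet_eq]
    exact div_pos (pow_pos (by linarith) 2) four_pos
  have hdisc : (a11 + a22) ^ 2 - 4 * (a11 * a22 - a12 * a21) = (2 * ρ / (1 + ρ)) ^ 2 := by
    rw [h11, h12, h21, h22]; field_simp; ring
  refine ⟨htr, hdet, hdisc ▸ sq_nonneg _, fun μ ⟨v, hv, hAv⟩ => ?_⟩
  refine Matrix.eigenvalue_neg_of_trace_neg_of_det_pos ?_ ?_ hv hAv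
  · rwa [Matrix.trace_fin_two_of]
  · rwa [Matrix.det_fin_two_of]
end

section
/- Let r, l > 0 and let L~(l,r;beta) be the Legendre transform of alpha |-> r*(e^alpha -1) + l*(e^{-alpha}-1). Then L~ is twice continuously differentiable in beta, its second derivative at beta = r - l equals 1/(r+l), and consequently the second-order Taylor expansion at beta_0 = r - l is L~(l,r;beta) = (beta - (r-l))^2 / (2(r+l)) + o((beta - (r-l))^2). -/
/-!
In the product rule for `β * log ((β + s) / (2r))`, with `s = √(β² + 4rl)`, the term
`β * (1 / s)` cancels the derivative `β / s` of `s`, so `L̃' β = log ((β + s) / (2r))` and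
`L̃'' β = 1 / s`; in particular `L̃` is smooth. At `β = r - l` the square root is `r + l`, so
`L̃` and `L̃'` vanish there and `L̃'' = 1 / (r + l)`: the expansion is Taylor's theorem with
little-o remainder.
-/

open Real

theorem ContDiff.isLittleO_sub_taylor_two {f : ℝ → ℝ} {x₀ : ℝ} (hf : ContDiff ℝ 2 f) :
    (fun x => f x - (f x₀ + deriv f x₀ * (x - x₀) + iteratedDeriv 2 f x₀ / 2 * (x - x₀) ^ 2))
      =o[nhds x₀] fun x => (x - x₀) ^ 2 := by
  refine (taylor_isLittleO_univ hf).congr_left fun x => ?_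
  simp only [taylorWithinEval_succ, taylor_within_zero_eval, iteratedDerivWithin_univ,
    smul_eq_mul]
  norm_num
  ring

section SqrtSqAdd

variable {c : ℝ}

theorem abs_lt_sqrt_sq_add (hc : 0 < c) (β : ℝ) : |β| < √(β ^ 2 + c) := by
  rw [← sqrt_sq_eq_abs]
  exact sqrt_lt_sqrt (sq_nonneg β) (by linarith)

theorem sqrt_sq_add_pos (hc : 0 < c) (β : ℝ) : 0 < √(β ^ 2 + c) :=
  (abs_nonneg β).trans_lt (abs_lt_sqrt_sq_add hc β)

theorem add_sqrt_sq_add_pos (hc : 0 < c) (β : ℝ) : 0 < β + √(β ^ 2 + c) := by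
  linarith [neg_abs_le β, abs_lt_sqrt_sq_add hc β]

theorem hasDerivAt_sqrt_sq_add (hc : 0 < c) (β : ℝ) :
    HasDerivAt (fun β => √(β ^ 2 + c)) (β / √(β ^ 2 + c)) β := by
  have hs := (sqrt_sq_add_pos hc β).ne'
  refine (((hasDerivAt_pow 2 β).add_const c).sqrt (by positivity)).congr_deriv ?_
  field_simp
  ring

theorem hasDerivAt_log_add_sqrt_sq_add_div (hc : 0 < c) {a : ℝ} (ha : a ≠ 0) (β : ℝ) :
    HasDerivAt (fun β => log ((β + √(β ^ 2 + c)) / a)) (1 / √(β ^ 2 + c)) β := by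
  have hs := (sqrt_sq_add_pos hc β).ne'
  have hu := (add_sqrt_sq_add_pos hc β).ne'
  refine ((((hasDerivAt_id β).add (hasDerivAt_sqrt_sq_add hc β)).div_const a).log
    (div_ne_zero hu ha)).congr_deriv ?_
  simp only [id, Pi.add_apply]
  field_simp
  ring

end SqrtSqAdd

theorem sqrt_sub_sq_add_four_mul {r l : ℝ} (h : 0 ≤ r + l) :
    √((r - l) ^ 2 + 4 * r * l) = r + l := by
  rw [show (r - l) ^ 2 + 4 * r * l = (r + l) ^ 2 by ring, sqrt_sq h]

noncomputable def voterLagrangian (l r β : ℝ) : ℝ :=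
  β * log ((β + √(β ^ 2 + 4 * r * l)) / (2 * r)) - √(β ^ 2 + 4 * r * l) + l + r

theorem contDiff_voterLagrangian {l r : ℝ} (hl : 0 < l) (hr : 0 < r) {n : WithTop ℕ∞} :
    ContDiff ℝ n (voterLagrangian l r) := by
  have hc : 0 < 4 * r * l := by positivity
  have hsqrt : ContDiff ℝ n fun β : ℝ => √(β ^ 2 + 4 * r * l) :=
    ((contDiff_id.pow 2).add contDiff_const).sqrt fun β => by positivity
  have hlog : ContDiff ℝ n fun β : ℝ => log ((β + √(β ^ 2 + 4 * r * l)) / (2 * r)) :=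
    ((contDiff_id.add hsqrt).div_const _).log fun β =>
      div_ne_zero (add_sqrt_sq_add_pos hc β).ne' (by positivity)
  exact (((contDiff_id.mul hlog).sub hsqrt).add contDiff_const).add contDiff_const

theorem deriv_voterLagrangian {l r : ℝ} (hl : 0 < l) (hr : 0 < r) :
    deriv (voterLagrangian l r) = fun β => log ((β + √(β ^ 2 + 4 * r * l)) / (2 * r)) := by
  have hc : 0 < 4 * r * l := by positivity
  funext β
  have hlog := hasDerivAt_log_add_sqrt_sq_add_div hc (by positivity : 2 * r ≠ 0) β
  have hs := (sqrt_sq_add_pos hc β).ne'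
  refine (((((hasDerivAt_id β).mul hlog).sub (hasDerivAt_sqrt_sq_add hc β)).add_const l).add_const
    r).deriv.trans ?_
  simp only [id]
  field_simp
  ring

theorem iteratedDeriv_two_voterLagrangian {l r : ℝ} (hl : 0 < l) (hr : 0 < r) (β : ℝ) :
    iteratedDeriv 2 (voterLagrangian l r) β = 1 / √(β ^ 2 + 4 * r * l) := by
  rw [iteratedDeriv_succ, iteratedDeriv_one, deriv_voterLagrangian hl hr]
  exact (hasDerivAt_log_add_sqrt_sq_add_div (by positivity) (by positivity) β).deriv

/-- For `r, l > 0`, the Legendre transform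
`L̃(l,r;β) = β log((β + √(β²+4rl))/(2r)) - √(β²+4rl) + l + r` is `C²` in `β`, its second
derivative at `β = r - l` equals `1/(r+l)`, and its second-order Taylor expansion at
`β₀ = r - l` is `L̃(l,r;β) = (β-(r-l))²/(2(r+l)) + o((β-(r-l))²)`. -/
theorem lagrangian_second_order_expansion (r l : ℝ) (hr : 0 < r) (hl : 0 < l) :
    let L : ℝ → ℝ := fun β =>
      β * Real.log ((β + Real.sqrt (β ^ 2 + 4 * r * l)) / (2 * r))
        - Real.sqrt (β ^ 2 + 4 * r * l) + l + r
    ContDiff ℝ 2 L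
    ∧ iteratedDeriv 2 L (r - l) = 1 / (r + l)
    ∧ (fun β => L β - (β - (r - l)) ^ 2 / (2 * (r + l)))
        =o[nhds (r - l)] fun β => (β - (r - l)) ^ 2 := by
  intro L
  rw [show L = voterLagrangian l r from rfl]
  have hsqrt := sqrt_sub_sq_add_four_mul (by positivity : 0 ≤ r + l)
  have hlog : log ((r - l + (r + l)) / (2 * r)) = 0 := by
    rw [show r - l + (r + l) = 2 * r by ring, div_self (by positivity), log_one]
  have hL₀ : voterLagrangian l r (r - l) = 0 := by
    rw [voterLagrangian, hsqrt, hlog]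
    ring
  have hL₁ : deriv (voterLagrangian l r) (r - l) = 0 := by
    rw [deriv_voterLagrangian hl hr]
    beta_reduce
    rw [hsqrt, hlog]
  have hL₂ : iteratedDeriv 2 (voterLagrangian l r) (r - l) = 1 / (r + l) := by
    rw [iteratedDeriv_two_voterLagrangian hl hr, hsqrt]
  refine ⟨contDiff_voterLagrangian hl hr, hL₂, ?_⟩
  convert (contDiff_voterLagrangian hl hr).isLittleO_sub_taylor_two (x₀ := r - l) using 3 with β
  rw [hL₀, hL₁, hL₂]
  field_simp
  ring
end

section
/- For q = 1/2 and rho in (0,1), the equilibria (0,0) and (1/2,1/2) of the vector field b are unstable: the Jacobian Db(0,0) has a strictly positive eigenvalue, and likewise Db(1/2,1/2) has a strictly positive eigenvalue. -/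
set_option maxHeartbeats 800000

private lemma deriv_quad (A B C x : ℝ) (f : ℝ → ℝ)
    (hf : ∀ t, f t = A * t ^ 2 + B * t + C) : deriv f x = 2 * A * x + B := by
  have hfe : f = fun t => A * t ^ 2 + B * t + C := funext hf
  have h : HasDerivAt (fun t : ℝ => A * t ^ 2 + B * t + C)
      (A * (↑2 * x ^ 1) + B * 1) x := by
    exact (((hasDerivAt_pow 2 x).const_mul A).add ((hasDerivAt_id x).const_mul B)).add_const C
  rw [hfe, h.deriv]
  norm_num
  ring

/-- For `q = 1/2` and `ρ ∈ (0,1)`, the equilibria `(0,0)` and `(1/2,1/2)` of the vector field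
`b(x,y) = ((1/2-x)(x+y) - ρx(1-x-y), ρ(1/2-y)(x+y) - y(1-x-y))` are unstable: the Jacobian
of `b` at each of these points has a strictly positive (real) eigenvalue. -/
theorem absorbing_equilibria_unstable (ρ : ℝ) (hρ : ρ ∈ Set.Ioo (0 : ℝ) 1) :
    let b1 : ℝ → ℝ → ℝ := fun x y => (1/2 - x) * (x + y) - ρ * x * (1 - x - y)
    let b2 : ℝ → ℝ → ℝ := fun x y => ρ * (1/2 - y) * (x + y) - y * (1 - x - y)
    let J : ℝ → ℝ → Matrix (Fin 2) (Fin 2) ℝ := fun p1 p2 =>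
      Matrix.of ![![deriv (fun x => b1 x p2) p1, deriv (fun y => b1 p1 y) p2],
                  ![deriv (fun x => b2 x p2) p1, deriv (fun y => b2 p1 y) p2]]
    (∃ μ : ℝ, 0 < μ ∧ ∃ v : Fin 2 → ℝ, v ≠ 0 ∧ (J 0 0).mulVec v = μ • v)
    ∧ (∃ μ : ℝ, 0 < μ ∧ ∃ v : Fin 2 → ℝ, v ≠ 0 ∧ (J (1/2) (1/2)).mulVec v = μ • v) := by
  obtain ⟨hρ0, hρ1⟩ := hρ
  intro b1 b2 J
  -- the common eigenvalue data
  set t : ℝ := (1 + ρ) / 2 with ht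
  set D : ℝ := t ^ 2 + 2 * (1 - ρ) ^ 2 with hD
  have hDnn : (0 : ℝ) ≤ D := by positivity
  set s : ℝ := Real.sqrt D with hs
  have hs2 : s ^ 2 = D := Real.sq_sqrt hDnn
  have hsnn : (0 : ℝ) ≤ s := Real.sqrt_nonneg _
  set μ : ℝ := (-t + s) / 2 with hμ
  have hμpos : 0 < μ := by
    have h1 : t ^ 2 < s ^ 2 := by
      rw [hs2, hD]; nlinarith [sq_nonneg (1 - ρ)]
    have htnn : 0 ≤ t := by rw [ht]; linarith
    have : t < s := by nlinarith
    rw [hμ]; linarith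
  -- the quadratic equation satisfied by μ : μ² + tμ - (1-ρ)²/2 = 0
  have hquad : μ ^ 2 + t * μ - (1 - ρ) ^ 2 / 2 = 0 := by
    rw [hμ]
    have : s ^ 2 = t ^ 2 + 2 * (1 - ρ) ^ 2 := by rw [hs2, hD]
    nlinarith [this]
  -- Jacobian entries at (0,0)
  have e11 : deriv (fun x => b1 x 0) 0 = 1 / 2 - ρ := by
    have := deriv_quad (ρ - 1) (1 / 2 - ρ) 0 0 (fun x => b1 x 0) (by intro x; simp only [b1]; ring)
    rw [this]; ring
  have e12 : deriv (fun y => b1 0 y) 0 = 1 / 2 := by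
    have := deriv_quad 0 (1 / 2) 0 0 (fun y => b1 0 y) (by intro y; simp only [b1]; ring)
    rw [this]; ring
  have e21 : deriv (fun x => b2 x 0) 0 = ρ / 2 := by
    have := deriv_quad 0 (ρ / 2) 0 0 (fun x => b2 x 0) (by intro x; simp only [b2]; ring)
    rw [this]; ring
  have e22 : deriv (fun y => b2 0 y) 0 = ρ / 2 - 1 := by
    have := deriv_quad (1 - ρ) (ρ / 2 - 1) 0 0 (fun y => b2 0 y) (by intro y; simp only [b2]; ring)
    rw [this]; ring
  -- Jacobian entries at (1/2,1/2)
  have f11 : deriv (fun x => b1 x 2⁻¹) (2⁻¹ : ℝ) = ρ / 2 - 1 := by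
    have := deriv_quad (ρ - 1) (-(ρ / 2)) (1 / 4) (2⁻¹ : ℝ)
      (fun x => b1 x 2⁻¹) (by intro x; simp only [b1]; ring)
    rw [this]; ring
  have f12 : deriv (fun y => b1 2⁻¹ y) (2⁻¹ : ℝ) = ρ / 2 := by
    have := deriv_quad 0 (ρ / 2) (-(ρ / 4)) (2⁻¹ : ℝ) (fun y => b1 2⁻¹ y)
      (by intro y; simp only [b1]; ring)
    rw [this]; ring
  have f21 : deriv (fun x => b2 x 2⁻¹) (2⁻¹ : ℝ) = 1 / 2 := by
    have := deriv_quad 0 (1 / 2) (-(1 / 4)) (2⁻¹ : ℝ) (fun x => b2 x 2⁻¹)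
      (by intro x; simp only [b2]; ring)
    rw [this]; ring
  have f22 : deriv (fun y => b2 2⁻¹ y) (2⁻¹ : ℝ) = 1 / 2 - ρ := by
    have := deriv_quad (1 - ρ) (-(1 / 2)) (ρ / 4) (2⁻¹ : ℝ)
      (fun y => b2 2⁻¹ y) (by intro y; simp only [b2]; ring)
    rw [this]; ring
  have hJ0 : J 0 0 = !![1/2 - ρ, 1/2; ρ/2, ρ/2 - 1] := by
    ext i j
    fin_cases i <;> fin_cases j <;>
      simp [J, e11, e12, e21, e22]
  have hJh : J (1/2) (1/2) = !![ρ/2 - 1, ρ/2; 1/2, 1/2 - ρ] := by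
    ext i j
    fin_cases i <;> fin_cases j <;>
      simp [J, f11, f12, f21, f22]
  constructor
  · refine ⟨μ, hμpos, ![1 / 2, μ - (1 / 2 - ρ)], ?_, ?_⟩
    · intro h
      have := congrFun h 0
      norm_num at this
    · rw [hJ0]
      funext i
      fin_cases i <;>
        simp [Matrix.mulVec, dotProduct, Fin.sum_univ_two]
      · ring
      · nlinarith [hquad]
  · refine ⟨μ, hμpos, ![ρ / 2, μ - (ρ / 2 - 1)], ?_, ?_⟩
    · intro h
      have := congrFun h 0
      simp at this
      exact absurd this (ne_of_gt hρ0)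
    · rw [hJh]
      funext i
      fin_cases i <;>
        simp [Matrix.mulVec, dotProduct, Fin.sum_univ_two]
      · ring
      · nlinarith [hquad]
end

section
/- For rho in (0,1), q in [1/2, 1) with rho < (1-q)/q, the Jacobian of the vector field V(m+,m-) = (-rho*m+*(1-m+-m-) + (q-m+)*(m+ + m-), -m-*(1-m+-m-) + rho*(1-q-m-)*(m+ + m-)) evaluated at the interior equilibrium has negative trace and positive determinant, hence both eigenvalues have strictly negative real part (the interior equilibrium is linearly stable). -/
lemma deriv_quad_s18 (a b c t : ℝ) : deriv (fun x => a * x ^ 2 + b * x + c) t = 2 * a * t + b := by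
  have h : HasDerivAt (fun x => a * x ^ 2 + b * x + c) (a * (2 * t ^ 1) + b * 1) t :=
    (((hasDerivAt_pow 2 t).const_mul a).add ((hasDerivAt_id t).const_mul b)).add_const c
  rw [h.deriv]; ring

set_option maxHeartbeats 1600000 in
/-- For `ρ ∈ (0,1)`, `q ∈ [1/2,1)` with `ρ < (1-q)/q`, the Jacobian of the vector field
`V(m⁺,m⁻) = (-ρm⁺(1-m⁺-m⁻) + (q-m⁺)(m⁺+m⁻), -m⁻(1-m⁺-m⁻) + ρ(1-q-m⁻)(m⁺+m⁻))` at the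
interior equilibrium `(m⁺*, m⁻*) = ((q(1+ρ)-ρ)/((1+ρ)(1-ρ)), ρ m⁺*)` has negative trace and
positive determinant; hence both (complex) eigenvalues have strictly negative real part. -/
theorem interior_equilibrium_linearly_stable (ρ q : ℝ)
    (hρ : ρ ∈ Set.Ioo (0 : ℝ) 1) (hq : q ∈ Set.Ico (1/2 : ℝ) 1)
    (hcond : ρ < (1 - q) / q) :
    let V1 : ℝ → ℝ → ℝ := fun x y => -ρ * x * (1 - x - y) + (q - x) * (x + y)
    let V2 : ℝ → ℝ → ℝ := fun x y => -y * (1 - x - y) + ρ * (1 - q - y) * (x + y)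
    let z1 : ℝ := (q * (1 + ρ) - ρ) / ((1 + ρ) * (1 - ρ))
    let z2 : ℝ := ρ * ((q * (1 + ρ) - ρ) / ((1 + ρ) * (1 - ρ)))
    let a11 := deriv (fun x => V1 x z2) z1
    let a12 := deriv (fun y => V1 z1 y) z2
    let a21 := deriv (fun x => V2 x z2) z1
    let a22 := deriv (fun y => V2 z1 y) z2
    a11 + a22 < 0 ∧ 0 < a11 * a22 - a12 * a21 ∧
    ∀ μ : ℂ, (∃ v : Fin 2 → ℂ, v ≠ 0 ∧
        (Matrix.of ![![(a11 : ℂ), (a12 : ℂ)], ![(a21 : ℂ), (a22 : ℂ)]]).mulVec v = μ • v) →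
      μ.re < 0 := by
  obtain ⟨hρ0, hρ1⟩ := hρ
  obtain ⟨hq0, hq1⟩ := hq
  intro V1 V2 z1 z2 a11 a12 a21 a22
  have hqpos : (0:ℝ) < q := by linarith
  have hcond' : ρ * q < 1 - q := (lt_div_iff₀ hqpos).mp hcond
  have hD : ((1 + ρ) * (1 - ρ)) ≠ 0 := ne_of_gt (by nlinarith)
  have hz1d : z1 = (q * (1 + ρ) - ρ) / ((1 + ρ) * (1 - ρ)) := rfl
  have hz2 : z2 = ρ * z1 := rfl
  -- compute the four derivatives
  have ea11 : a11 = 2 * (ρ - 1) * z1 + (-ρ + ρ * z2 + q - z2) := by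
    show deriv (fun x => -ρ * x * (1 - x - z2) + (q - x) * (x + z2)) z1 = _
    have : (fun x : ℝ => -ρ * x * (1 - x - z2) + (q - x) * (x + z2))
        = fun x => (ρ - 1) * x ^ 2 + (-ρ + ρ * z2 + q - z2) * x + q * z2 := by
      funext x; ring
    rw [this, deriv_quad_s18]
  have ea12 : a12 = ρ * z1 + q - z1 := by
    show deriv (fun y => -ρ * z1 * (1 - z1 - y) + (q - z1) * (z1 + y)) z2 = _
    have : (fun y : ℝ => -ρ * z1 * (1 - z1 - y) + (q - z1) * (z1 + y))
        = fun y => (0:ℝ) * y ^ 2 + (ρ * z1 + q - z1) * y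
            + (-ρ * z1 * (1 - z1) + (q - z1) * z1) := by
      funext y; ring
    rw [this, deriv_quad_s18]; ring
  have ea21 : a21 = z2 + ρ * (1 - q - z2) := by
    show deriv (fun x => -z2 * (1 - x - z2) + ρ * (1 - q - z2) * (x + z2)) z1 = _
    have : (fun x : ℝ => -z2 * (1 - x - z2) + ρ * (1 - q - z2) * (x + z2))
        = fun x => (0:ℝ) * x ^ 2 + (z2 + ρ * (1 - q - z2)) * x
            + (-z2 * (1 - z2) + ρ * (1 - q - z2) * z2) := by
      funext x; ring
    rw [this, deriv_quad_s18]; ring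
  have ea22 : a22 = 2 * (1 - ρ) * z2 + (-1 + z1 + ρ * (1 - q) - ρ * z1) := by
    show deriv (fun y => -y * (1 - z1 - y) + ρ * (1 - q - y) * (z1 + y)) z2 = _
    have : (fun y : ℝ => -y * (1 - z1 - y) + ρ * (1 - q - y) * (z1 + y))
        = fun y => (1 - ρ) * y ^ 2 + (-1 + z1 + ρ * (1 - q) - ρ * z1) * y
            + ρ * (1 - q) * z1 := by
      funext y; ring
    rw [this, deriv_quad_s18]
  -- trace and determinant values
  have htrval : a11 + a22 = -(1 + ρ ^ 2) / (1 + ρ) := by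
    rw [ea11, ea22, hz2, hz1d]
    have h1 : (1:ℝ) + ρ ≠ 0 := by nlinarith
    have h2 : (1:ℝ) - ρ ≠ 0 := by nlinarith
    field_simp
    ring
  have htrace : a11 + a22 < 0 := by
    rw [htrval, neg_div]
    have : (0:ℝ) < (1 + ρ ^ 2) / (1 + ρ) := div_pos (by nlinarith) (by linarith)
    linarith
  have hdetval : a11 * a22 - a12 * a21 = (1 - q - q * ρ) * (q - (1 - q) * ρ) := by
    rw [ea11, ea12, ea21, ea22, hz2, hz1d]
    have h1 : (1:ℝ) + ρ ≠ 0 := by nlinarith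
    have h2 : (1:ℝ) - ρ ≠ 0 := by nlinarith
    field_simp
    ring
  have hdetpos : 0 < a11 * a22 - a12 * a21 := by
    rw [hdetval]
    have h1 : 0 < 1 - q - q * ρ := by nlinarith
    have h2 : 0 < q - (1 - q) * ρ := by nlinarith
    positivity
  clear_value a11 a12 a21 a22 z1 z2 V1 V2
  refine ⟨htrace, hdetpos, ?_⟩
  -- eigenvalues
  rintro μ ⟨v, hv0, hv⟩
  have h0 := congrFun hv 0
  have h1 := congrFun hv 1
  simp [Matrix.mulVec, dotProduct, Fin.sum_univ_two] at h0 h1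
  -- characteristic equation
  have hP : ((μ : ℂ) - a11) * (μ - a22) - a12 * a21 = 0 := by
    have key0 : (((μ : ℂ) - a11) * (μ - a22) - a12 * a21) * v 0 = 0 := by
      linear_combination (a22 - μ) * h0 - (a12 : ℂ) * h1
    have key1 : (((μ : ℂ) - a11) * (μ - a22) - a12 * a21) * v 1 = 0 := by
      linear_combination (a11 - μ) * h1 - (a21 : ℂ) * h0
    obtain ⟨i, hi⟩ := Function.ne_iff.mp hv0
    fin_cases i
    · exact (mul_eq_zero.mp key0).resolve_right (by simpa using hi)
    · exact (mul_eq_zero.mp key1).resolve_right (by simpa using hi)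
  have hre := congrArg Complex.re hP
  have him := congrArg Complex.im hP
  simp [Complex.mul_re, Complex.mul_im, Complex.sub_re, Complex.sub_im] at hre him
  have himeq : μ.im * ((μ.re - a11) + (μ.re - a22)) = 0 := by linear_combination him
  by_contra hx
  push_neg at hx
  clear hv h0 h1 hP hv0 hcond hz1d htrval hdetval ea11 ea12 ea21 ea22 hz2 hD him
  rcases mul_eq_zero.mp himeq with hy | hs
  · rw [hy] at hre
    nlinarith [hre, htrace, hdetpos, mul_nonneg hx hx]
  · linarith [htrace]
end
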